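/- arXiv:2311.01932 — 2 statements merged into one kernel-verified Lean document; each statement's English description precedes it below -/
import Mathlib

section
/- There exists N such that for every integer m ≥ N, the matroid M_m = U^{(2)}_{3m,2m} (the 2-thickening of the uniform matroid of rank 2m on 3m elements) satisfies T_{M_m}(2,0)·T_{M_m}(0,2) < T_{M_m}(1,1)^2. -/
open Set

/-- The rank of a set in a matroid: the largest cardinality of an independent subset. -/
noncomputable def matroidRk {α : Type*} (M : Matroid α) (S : Set α) : ℕ :=
  sSup {n : ℕ | ∃ I, M.Indep I ∧ I ⊆ S ∧ I.ncard = n}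

/-- The Tutte polynomial of a matroid with finite ground set, evaluated at `(x, y)`. -/
noncomputable def tutte {α : Type*} (M : Matroid α) (hE : M.E.Finite) (x y : ℝ) : ℝ :=
  ∑ S ∈ hE.toFinset.powerset,
    (x - 1) ^ (matroidRk M M.E - matroidRk M (S : Set α)) *
      (y - 1) ^ (S.card - matroidRk M (S : Set α))

/-- The uniform matroid of rank `r` on the ground set `Fin n`. -/
noncomputable def unif (n r : ℕ) : Matroid (Fin n) :=
  (IndepMatroid.ofFinite Set.finite_univ (fun I => I.ncard ≤ r)
    (by simp)
    (fun I J hJ hIJ => le_trans (Set.ncard_le_ncard hIJ J.toFinite) hJ)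
    (fun I J _ hJ hIJ => by
      obtain ⟨e, heJ, heI⟩ := Set.exists_mem_notMem_of_ncard_lt_ncard hIJ I.toFinite
      exact ⟨e, heJ, heI, le_trans (Set.ncard_insert_le e I)
        (le_trans (Nat.succ_le_of_lt hIJ) hJ)⟩)
    (fun I _ => Set.subset_univ I)).matroid

/-- The `k`-thickening of a matroid: each element is replaced by `k` parallel copies. -/
noncomputable def thicken {α : Type*} (M : Matroid α) (k : ℕ) : Matroid (α × Fin k) :=
  M.comap Prod.fst

theorem thicken_ground_finite {α : Type*} {M : Matroid α} (hE : M.E.Finite) (k : ℕ) :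
    (thicken M k).E.Finite :=
  (hE.prod Set.finite_univ).subset fun x hx => ⟨hx, trivial⟩

variable {n r : ℕ}

lemma unif_indep_iff {I : Set (Fin n)} : (unif n r).Indep I ↔ I.ncard ≤ r := by simp [unif]

lemma thick_indep_iff {I : Set (Fin n × Fin 2)} :
    (thicken (unif n r) 2).Indep I ↔ (Prod.fst '' I).ncard ≤ r ∧ InjOn Prod.fst I := by
  simp [thicken, Matroid.comap_indep_iff, unif_indep_iff]

lemma thick_ground : (thicken (unif n r) 2).E = univ := by
  simp [thicken, unif]

lemma rk_eq (S : Set (Fin n × Fin 2)) :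
    matroidRk (thicken (unif n r) 2) S = min ((Prod.fst '' S).ncard) r := by
  classical
  set p := (Prod.fst '' S).ncard with hp
  have hub : ∀ k ∈ {k : ℕ | ∃ I, (thicken (unif n r) 2).Indep I ∧ I ⊆ S ∧ I.ncard = k},
      k ≤ min p r := by
    rintro k ⟨I, hI, hIS, rfl⟩
    rw [thick_indep_iff] at hI
    have h1 : I.ncard = (Prod.fst '' I).ncard := (Set.ncard_image_of_injOn hI.2).symm
    have h2 : (Prod.fst '' I).ncard ≤ p :=
      Set.ncard_le_ncard (Set.image_mono hIS) (S.toFinite.image _)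
    exact le_min (h1 ▸ h2) (h1 ▸ hI.1)
  apply le_antisymm
  · exact csSup_le ⟨0, ∅, by simp [thick_indep_iff]⟩ hub
  · obtain ⟨T, hTsub, hTcard⟩ :=
      Set.exists_subset_card_eq (min_le_left p r : min p r ≤ (Prod.fst '' S).ncard)
    set g : Fin n → Fin n × Fin 2 :=
      fun t => if h : t ∈ Prod.fst '' S then h.choose else (t, 0) with hg
    have hgS : ∀ t ∈ T, g t ∈ S ∧ (g t).1 = t := by
      intro t ht
      have h : t ∈ Prod.fst '' S := hTsub ht
      simp only [hg, dif_pos h]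
      exact ⟨h.choose_spec.1, h.choose_spec.2⟩
    have hginj : InjOn g T := by
      intro a ha b hb hab
      rw [← (hgS a ha).2, ← (hgS b hb).2, hab]
    have hfst : ∀ x ∈ g '' T, ∀ y ∈ g '' T, x.1 = y.1 → x = y := by
      rintro x ⟨a, ha, rfl⟩ y ⟨b, hb, rfl⟩ hxy
      rw [(hgS a ha).2, (hgS b hb).2] at hxy
      rw [hxy]
    have himg : Prod.fst '' (g '' T) = T := by
      rw [← image_comp]
      apply Set.image_congr (g := id) (fun a ha => (hgS a ha).2) |>.trans (image_id T)
    have hmem : min p r ∈ {k : ℕ | ∃ I, (thicken (unif n r) 2).Indep I ∧ I ⊆ S ∧ I.ncard = k} := by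
      refine ⟨g '' T, ?_, ?_, ?_⟩
      · rw [thick_indep_iff, himg, hTcard]
        exact ⟨min_le_right _ _, hfst⟩
      · rintro x ⟨a, ha, rfl⟩; exact (hgS a ha).1
      · rw [Set.ncard_image_of_injOn hginj, hTcard]
    exact le_csSup ⟨min p r, hub⟩ hmem

lemma rk_coe (S : Finset (Fin n × Fin 2)) :
    matroidRk (thicken (unif n r) 2) ↑S = min ((S.image Prod.fst).card) r := by
  rw [rk_eq, ← Finset.coe_image, Set.ncard_coe_finset]

lemma rk_ground (hrn : r ≤ n) :
    matroidRk (thicken (unif n r) 2) (thicken (unif n r) 2).E = r := by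
  rw [thick_ground, rk_eq, Set.image_univ, Prod.fst_surjective.range_eq, Set.ncard_univ]
  simp [hrn]

lemma toFinset_eq (hE : (thicken (unif n r) 2).E.Finite) : hE.toFinset = Finset.univ := by
  ext x
  simp [Set.Finite.mem_toFinset, thick_ground]


variable {n r : ℕ}

lemma fin2 (c : Fin 2) : c = 0 ∨ c = 1 := by
  match c with | 0 => exact Or.inl rfl | 1 => exact Or.inr rfl

lemma fiber_card (A : Finset (Fin n)) (hA : A.card = r) :
    ((Finset.univ.powerset.filter
        (fun S : Finset (Fin n × Fin 2) => (S.card = r ∧ (S.image Prod.fst).card = r)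
          ∧ S.image Prod.fst = A)).card) = 2 ^ r := by
  classical
  rw [← hA, ← Finset.card_powerset]
  apply Finset.card_nbij'
    (i := fun S => (S.filter (fun x => x.2 = 1)).image Prod.fst)
    (j := fun B => A.image (fun a => (a, if a ∈ B then 1 else 0)))
  · -- i maps into A.powerset
    intro S hS
    simp only [Finset.mem_coe, Finset.mem_filter, Finset.mem_powerset] at hS
    rw [Finset.mem_coe, Finset.mem_powerset, ← hS.2.2]
    exact Finset.image_subset_image (Finset.filter_subset _ _)
  · -- j maps into fiber
    intro B hB
    rw [Finset.mem_coe, Finset.mem_powerset] at hB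
    have himg : (A.image (fun a => ((a, if a ∈ B then 1 else 0) : Fin n × Fin 2))).image Prod.fst
        = A := by
      rw [Finset.image_image]; exact Finset.image_id'
    have hcard : (A.image (fun a => ((a, if a ∈ B then 1 else 0) : Fin n × Fin 2))).card
        = A.card := by
      apply Finset.card_image_of_injOn
      intro x _ y _ hxy
      exact congrArg Prod.fst hxy
    simp only [Finset.mem_coe, Finset.mem_filter, Finset.mem_powerset]
    exact ⟨Finset.subset_univ _, ⟨hcard, by rw [himg]⟩, himg⟩
  · -- left inverse
    intro S hS
    simp only [Finset.mem_coe, Finset.mem_filter, Finset.mem_powerset] at hS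
    obtain ⟨-, ⟨hcard, hcardimg⟩, hA'⟩ := hS
    have hinj : Set.InjOn Prod.fst (S : Set (Fin n × Fin 2)) :=
      Finset.card_image_iff.mp (hcardimg.trans hcard.symm)
    ext x
    simp only [Finset.mem_image, ← hA', Finset.mem_filter]
    constructor
    · rintro ⟨a, ⟨y, hy, rfl⟩, rfl⟩
      by_cases hmem : y.1 ∈ (S.filter (fun x => x.2 = 1)).image Prod.fst
      · simp only [Finset.mem_image, Finset.mem_filter] at hmem
        rw [if_pos hmem]
        obtain ⟨z, ⟨hzS, hz2⟩, hz1⟩ := hmem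
        have : z = (y.1, 1) := Prod.ext hz1 hz2
        rwa [← this]
      · have hmem' := hmem
        simp only [Finset.mem_image, Finset.mem_filter] at hmem'
        rw [if_neg hmem']
        have hy2 : y.2 = 0 := by
          rcases fin2 y.2 with h | h
          · exact h
          · exact absurd (Finset.mem_image.mpr ⟨y, Finset.mem_filter.mpr ⟨hy, h⟩, rfl⟩) hmem
        have : y = (y.1, 0) := Prod.ext rfl hy2
        rwa [← this]
    · intro hx
      refine ⟨x.1, ⟨x, hx, rfl⟩, ?_⟩
      by_cases hx2 : x.2 = 1
      · have hmem : x.1 ∈ (S.filter (fun x => x.2 = 1)).image Prod.fst :=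
          Finset.mem_image.mpr ⟨x, Finset.mem_filter.mpr ⟨hx, hx2⟩, rfl⟩
        simp only [Finset.mem_image, Finset.mem_filter] at hmem
        rw [if_pos hmem, ← hx2]
      · have hx0 : x.2 = 0 := (fin2 x.2).resolve_right hx2
        have hmem : x.1 ∉ (S.filter (fun x => x.2 = 1)).image Prod.fst := by
          intro hmem
          obtain ⟨z, hz, hz1⟩ := Finset.mem_image.mp hmem
          rw [Finset.mem_filter] at hz
          have := hinj hz.1 hx hz1
          rw [← this, hz.2] at hx0
          exact absurd hx0 (by decide)
        have hmem' := hmem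
        simp only [Finset.mem_image, Finset.mem_filter] at hmem'
        rw [if_neg hmem', ← hx0]
  · -- right inverse
    intro B hB
    rw [Finset.mem_coe, Finset.mem_powerset] at hB
    ext b
    simp only [Finset.mem_image, Finset.mem_filter]
    constructor
    · rintro ⟨x, ⟨⟨a, ha, rfl⟩, h1⟩, rfl⟩
      by_cases hab : a ∈ B
      · exact hab
      · simp only [hab, if_neg, not_false_iff] at h1
        exact absurd h1 (by decide)
    · intro hb
      exact ⟨(b, 1), ⟨⟨b, hB hb, by simp [hb]⟩, rfl⟩, rfl⟩

lemma basis_count :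
    ((Finset.univ.powerset.filter
        (fun S : Finset (Fin n × Fin 2) => S.card = r ∧ (S.image Prod.fst).card = r)).card)
      = Nat.choose n r * 2 ^ r := by
  classical
  rw [Finset.card_eq_sum_card_fiberwise
    (f := fun S => S.image Prod.fst) (t := Finset.univ.powersetCard r)
    (fun S hS => by
      rw [Finset.mem_coe, Finset.mem_filter] at hS
      rw [Finset.mem_coe, Finset.mem_powersetCard_univ]
      exact hS.2.2)]
  have : ∀ A ∈ Finset.univ.powersetCard r (α := Fin n),
      ((Finset.univ.powerset.filter
        (fun S : Finset (Fin n × Fin 2) => S.card = r ∧ (S.image Prod.fst).card = r)).filter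
          (fun S => S.image Prod.fst = A)).card = 2 ^ r := by
    intro A hA
    rw [Finset.filter_filter]
    exact fiber_card A (Finset.mem_powersetCard_univ.mp hA)
  rw [Finset.sum_congr rfl this, Finset.sum_const, Finset.card_powersetCard, Finset.card_univ,
    Fintype.card_fin, smul_eq_mul]
section Tutte
variable {n r : ℕ}

lemma tutte_11 (hrn : r ≤ n) (hE : (thicken (unif n r) 2).E.Finite) :
    tutte (thicken (unif n r) 2) hE 1 1 = (Nat.choose n r * 2 ^ r : ℝ) := by
  classical
  rw [tutte, toFinset_eq hE]
  have hterm : ∀ S : Finset (Fin n × Fin 2),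
      ((1:ℝ) - 1) ^ (matroidRk (thicken (unif n r) 2) (thicken (unif n r) 2).E -
          matroidRk (thicken (unif n r) 2) ↑S) *
        ((1:ℝ) - 1) ^ (S.card - matroidRk (thicken (unif n r) 2) ↑S) =
      if S.card = r ∧ (S.image Prod.fst).card = r then 1 else 0 := by
    intro S
    rw [rk_ground hrn, rk_coe]
    set p := (S.image Prod.fst).card with hp
    have hple : p ≤ S.card := Finset.card_image_le
    by_cases h : S.card = r ∧ p = r
    · rw [if_pos h]
      have h1 : r - min p r = 0 := by omega
      have h2 : S.card - min p r = 0 := by omega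
      rw [h1, h2]
      norm_num
    · rw [if_neg h]
      have : r - min p r ≠ 0 ∨ S.card - min p r ≠ 0 := by omega
      rcases this with h' | h'
      · rw [sub_self, zero_pow h', zero_mul]
      · rw [sub_self, zero_pow h', mul_zero]
  rw [Finset.sum_congr rfl (fun S _ => hterm S), Finset.sum_boole, basis_count]
  push_cast
  ring

end Tutte


noncomputable def pick {n : ℕ} (S : Finset (Fin n × Fin 2)) : Option (Fin n) :=
  ((S.filter (fun x => x.2 = 0)).image Prod.fst).max

noncomputable def toggle {n : ℕ} (S : Finset (Fin n × Fin 2)) : Finset (Fin n × Fin 2) :=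
  (pick S).elim S (fun a => if (a, 1) ∈ S then S.erase (a, 1) else insert (a, 1) S)

variable {n r : ℕ}

lemma toggle_filter_zero (S : Finset (Fin n × Fin 2)) (a : Fin n) :
    ((if (a, 1) ∈ S then S.erase (a, 1) else insert (a, 1) S).filter (fun x => x.2 = 0))
      = S.filter (fun x => x.2 = 0) := by
  split_ifs with h
  · ext x
    simp only [Finset.mem_filter, Finset.mem_erase]
    constructor
    · rintro ⟨⟨-, hxS⟩, h0⟩; exact ⟨hxS, h0⟩
    · rintro ⟨hxS, h0⟩
      refine ⟨⟨?_, hxS⟩, h0⟩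
      rintro rfl
      simp at h0
  · ext x
    simp only [Finset.mem_filter, Finset.mem_insert]
    constructor
    · rintro ⟨rfl | hxS, h0⟩
      · simp at h0
      · exact ⟨hxS, h0⟩
    · rintro ⟨hxS, h0⟩; exact ⟨Or.inr hxS, h0⟩

lemma toggle_image_fst (S : Finset (Fin n × Fin 2)) (a : Fin n) (ha0 : ((a, 0) : Fin n × Fin 2) ∈ S) :
    ((if (a, 1) ∈ S then S.erase (a, 1) else insert (a, 1) S).image Prod.fst)
      = S.image Prod.fst := by
  split_ifs with h
  · ext b
    simp only [Finset.mem_image, Finset.mem_erase]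
    constructor
    · rintro ⟨x, ⟨-, hxS⟩, rfl⟩; exact ⟨x, hxS, rfl⟩
    · rintro ⟨x, hxS, rfl⟩
      by_cases hx : x = (a, 1)
      · refine ⟨(a, 0), ⟨fun hEq => by simp [Prod.ext_iff] at hEq, ha0⟩, ?_⟩
        rw [hx]
      · exact ⟨x, ⟨hx, hxS⟩, rfl⟩
  · rw [Finset.image_insert]
    exact Finset.insert_eq_self.mpr (Finset.mem_image.mpr ⟨(a, 0), ha0, rfl⟩)

lemma neg_one_pow_cancel (k : ℕ) : (-1 : ℝ) ^ (k + 1) + (-1 : ℝ) ^ k = 0 := by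
  rw [pow_succ]; ring

lemma sum_P_zero (n r : ℕ) :
    ∑ S ∈ Finset.univ.powerset.filter
        (fun S : Finset (Fin n × Fin 2) => (S.filter (fun x => x.2 = 0)).Nonempty),
      (-1 : ℝ) ^ (S.card - min ((S.image Prod.fst).card) r) = 0 := by
  classical
  apply Finset.sum_involution (g := fun S _ => toggle S)
  · -- cancellation
    intro S hS
    have hPS : (S.filter (fun x => x.2 = 0)).Nonempty := (Finset.mem_filter.mp hS).2
    obtain ⟨a, ha⟩ := Finset.max_of_nonempty (hPS.image Prod.fst)
    have hpa : pick S = some a := ha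
    have ha0 : ((a, 0) : Fin n × Fin 2) ∈ S := by
      have := Finset.mem_of_max ha
      obtain ⟨z, hz, hz1⟩ := Finset.mem_image.mp this
      rw [Finset.mem_filter] at hz
      have hza : z = (a, 0) := Prod.ext hz1 hz.2
      rw [hza] at hz
      exact hz.1
    have hg : toggle S = if (a, 1) ∈ S then S.erase (a, 1) else insert (a, 1) S := by
      rw [toggle, hpa]
      rfl
    have himg : (toggle S).image Prod.fst = S.image Prod.fst := by
      rw [hg]; exact toggle_image_fst S a ha0
    have hple : (S.image Prod.fst).card ≤ S.card := Finset.card_image_le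
    rw [himg]
    by_cases hmem : ((a, 1) : Fin n × Fin 2) ∈ S
    · rw [hg, if_pos hmem, Finset.card_erase_of_mem hmem]
      have hple2 : (S.image Prod.fst).card ≤ S.card - 1 := by
        have h1 : ((S.erase (a, 1)).image Prod.fst).card ≤ S.card - 1 := by
          calc _ ≤ (S.erase (a, 1)).card := Finset.card_image_le
            _ = S.card - 1 := Finset.card_erase_of_mem hmem
        calc (S.image Prod.fst).card
            = ((S.erase (a, 1)).image Prod.fst).card := by
              rw [show (S.erase (a,1)).image Prod.fst = S.image Prod.fst from by
                have := toggle_image_fst S a ha0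
                rwa [if_pos hmem] at this]
          _ ≤ S.card - 1 := h1
      have hcard1 : 1 ≤ S.card := Finset.card_pos.mpr ⟨_, hmem⟩
      have he : S.card - min ((S.image Prod.fst).card) r
          = (S.card - 1 - min ((S.image Prod.fst).card) r) + 1 := by omega
      rw [he]
      exact neg_one_pow_cancel _
    · rw [hg, if_neg hmem, Finset.card_insert_of_notMem hmem]
      have he : S.card + 1 - min ((S.image Prod.fst).card) r
          = (S.card - min ((S.image Prod.fst).card) r) + 1 := by omega
      rw [he, add_comm ((-1:ℝ) ^ (S.card - min ((S.image Prod.fst).card) r))]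
      exact neg_one_pow_cancel _
  · -- g_ne
    intro S hS _
    have hPS : (S.filter (fun x => x.2 = 0)).Nonempty := (Finset.mem_filter.mp hS).2
    obtain ⟨a, ha⟩ := Finset.max_of_nonempty (hPS.image Prod.fst)
    have hg : toggle S = if (a, 1) ∈ S then S.erase (a, 1) else insert (a, 1) S := by
      rw [toggle, show pick S = some a from ha]
      rfl
    rw [hg]
    split_ifs with h
    · intro hEq
      have := Finset.card_erase_of_mem h
      rw [hEq] at this
      have hcard1 : 1 ≤ S.card := Finset.card_pos.mpr ⟨_, h⟩
      omega
    · intro hEq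
      have := Finset.card_insert_of_notMem h
      rw [hEq] at this
      omega
  · -- g_mem
    intro S hS
    have hPS : (S.filter (fun x => x.2 = 0)).Nonempty := (Finset.mem_filter.mp hS).2
    obtain ⟨a, ha⟩ := Finset.max_of_nonempty (hPS.image Prod.fst)
    have hg : toggle S = if (a, 1) ∈ S then S.erase (a, 1) else insert (a, 1) S := by
      rw [toggle, show pick S = some a from ha]
      rfl
    rw [Finset.mem_filter, hg]
    refine ⟨Finset.mem_powerset.mpr (Finset.subset_univ _), ?_⟩
    rw [toggle_filter_zero S a]
    exact hPS
  · -- involution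
    intro S hS
    have hPS : (S.filter (fun x => x.2 = 0)).Nonempty := (Finset.mem_filter.mp hS).2
    obtain ⟨a, ha⟩ := Finset.max_of_nonempty (hPS.image Prod.fst)
    have hg : toggle S = if (a, 1) ∈ S then S.erase (a, 1) else insert (a, 1) S := by
      rw [toggle, show pick S = some a from ha]
      rfl
    have hpick : pick (toggle S) = some a := by
      rw [pick, hg, toggle_filter_zero S a]
      exact ha
    have hg2 : toggle (toggle S) = if (a, 1) ∈ toggle S then (toggle S).erase (a, 1)
        else insert (a, 1) (toggle S) := by
      rw [toggle, hpick]
      rfl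
    rw [hg2, hg]
    by_cases hmem : ((a, 1) : Fin n × Fin 2) ∈ S
    · rw [if_pos hmem, if_neg (Finset.notMem_erase _ _), Finset.insert_erase hmem]
    · rw [if_neg hmem, if_pos (Finset.mem_insert_self _ _), Finset.erase_insert hmem]


section Bounds
variable {n r : ℕ}

lemma abs_sum_le_card {β : Type*} (s : Finset β) (g : β → ℝ) (h : ∀ x ∈ s, |g x| ≤ 1) :
    |∑ x ∈ s, g x| ≤ (s.card : ℝ) :=
  le_trans (Finset.abs_sum_le_sum_abs _ _) (by
    calc ∑ x ∈ s, |g x| ≤ ∑ x ∈ s, 1 := Finset.sum_le_sum h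
      _ = s.card := by rw [Finset.sum_const, nsmul_eq_mul, mul_one])

lemma abs_tutte_02_le (hE : (thicken (unif n r) 2).E.Finite) :
    |tutte (thicken (unif n r) 2) hE 0 2| ≤ 2 ^ (n * 2) := by
  rw [tutte, toFinset_eq hE]
  refine le_trans (abs_sum_le_card _ _ ?_) ?_
  · intro S _
    rw [abs_mul, abs_pow, abs_pow]
    norm_num
  · rw [Finset.card_powerset, Finset.card_univ]
    have hcard : Fintype.card (Fin n × Fin 2) = n * 2 := by simp
    rw [hcard]
    push_cast
    exact le_refl _

lemma card_filter_notP_le :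
    ((Finset.univ.powerset.filter
        (fun S : Finset (Fin n × Fin 2) => ¬ (S.filter (fun x => x.2 = 0)).Nonempty)).card)
      ≤ 2 ^ n := by
  classical
  have h := Finset.card_le_card_of_injOn (f := fun S : Finset (Fin n × Fin 2) => S.image Prod.fst)
    (s := Finset.univ.powerset.filter
        (fun S : Finset (Fin n × Fin 2) => ¬ (S.filter (fun x => x.2 = 0)).Nonempty))
    (t := (Finset.univ : Finset (Fin n)).powerset)
    (fun S _ => Finset.mem_powerset.mpr (Finset.subset_univ _))
    ?_
  · calc _ ≤ _ := h
      _ = 2 ^ n := by rw [Finset.card_powerset, Finset.card_univ, Fintype.card_fin]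
  · intro S hS T hT hST
    simp only [Finset.coe_filter, Set.mem_setOf_eq, Finset.not_nonempty_iff_eq_empty,
      Finset.filter_eq_empty_iff] at hS hT
    have hSone : ∀ x ∈ S, x.2 = (1 : Fin 2) := fun x hx => (fin2 x.2).resolve_left (hS.2 hx)
    have hTone : ∀ x ∈ T, x.2 = (1 : Fin 2) := fun x hx => (fin2 x.2).resolve_left (hT.2 hx)
    have key : ∀ (U : Finset (Fin n × Fin 2)), (∀ x ∈ U, x.2 = (1 : Fin 2)) →
        U = (U.image Prod.fst).image (fun a => (a, 1)) := by
      intro U hU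
      ext x
      simp only [Finset.mem_image, exists_exists_and_eq_and]
      constructor
      · intro hx
        exact ⟨x, hx, by rw [← hU x hx]⟩
      · rintro ⟨y, hy, rfl⟩
        have := hU y hy
        rwa [← Prod.mk.eta (p := y), this] at hy ⊢
    rw [key S hSone, key T hTone,
      show Finset.image Prod.fst S = Finset.image Prod.fst T from hST]

lemma abs_tutte_20_le (hrn : r ≤ n) (hE : (thicken (unif n r) 2).E.Finite) :
    |tutte (thicken (unif n r) 2) hE 2 0| ≤ 2 ^ n := by
  classical
  rw [tutte, toFinset_eq hE]
  have hterm : ∀ S : Finset (Fin n × Fin 2),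
      ((2:ℝ) - 1) ^ (matroidRk (thicken (unif n r) 2) (thicken (unif n r) 2).E -
          matroidRk (thicken (unif n r) 2) ↑S) *
        ((0:ℝ) - 1) ^ (S.card - matroidRk (thicken (unif n r) 2) ↑S) =
      (-1 : ℝ) ^ (S.card - min ((S.image Prod.fst).card) r) := by
    intro S
    rw [rk_coe]
    norm_num
  rw [Finset.sum_congr rfl (fun S _ => hterm S),
    ← Finset.sum_filter_add_sum_filter_not Finset.univ.powerset
      (fun S : Finset (Fin n × Fin 2) => (S.filter (fun x => x.2 = 0)).Nonempty),
    sum_P_zero n r, zero_add]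
  refine le_trans (abs_sum_le_card _ _ ?_) ?_
  · intro S _
    rw [abs_pow]
    norm_num
  · calc ((Finset.univ.powerset.filter
          (fun S : Finset (Fin n × Fin 2) => ¬ (S.filter (fun x => x.2 = 0)).Nonempty)).card : ℝ)
        ≤ ((2 ^ n : ℕ) : ℝ) := by exact_mod_cast card_filter_notP_le (n := n)
      _ = 2 ^ n := by push_cast; ring

end Bounds


lemma choose_36_24 : Nat.choose 36 24 = 1251677700 := by
  have h := Nat.choose_mul_factorial_mul_factorial (show 24 ≤ 36 by norm_num)
  have h2 : (1251677700 : ℕ) * Nat.factorial 24 * Nat.factorial (36 - 24) = Nat.factorial 36 := by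
    norm_num [Nat.factorial]
  have := h.trans h2.symm
  have hpos : 0 < Nat.factorial 24 * Nat.factorial (36 - 24) := by positivity
  rw [mul_assoc, mul_assoc] at this
  exact Nat.eq_of_mul_eq_mul_right hpos this

lemma choose_step {m : ℕ} (hm : 4 ≤ m) :
    6 * Nat.choose (3 * m) (2 * m) ≤ Nat.choose (3 * (m + 1)) (2 * (m + 1)) := by
  set c0 := Nat.choose (3 * m) (2 * m) with hc0
  set c1 := Nat.choose (3 * (m + 1)) (2 * (m + 1)) with hc1
  have h0 : c0 * Nat.factorial (2 * m) * Nat.factorial m = Nat.factorial (3 * m) := by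
    have := Nat.choose_mul_factorial_mul_factorial (show 2 * m ≤ 3 * m by omega)
    rwa [show 3 * m - 2 * m = m by omega] at this
  have h1 : c1 * Nat.factorial (2 * m + 2) * Nat.factorial (m + 1)
      = Nat.factorial (3 * m + 3) := by
    have := Nat.choose_mul_factorial_mul_factorial (show 2 * (m + 1) ≤ 3 * (m + 1) by omega)
    rwa [show 3 * (m + 1) - 2 * (m + 1) = m + 1 by omega, show 2 * (m + 1) = 2 * m + 2 by ring,
      show 3 * (m + 1) = 3 * m + 3 by ring] at this
  have hf3 : Nat.factorial (3 * m + 3)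
      = (3 * m + 3) * ((3 * m + 2) * ((3 * m + 1) * Nat.factorial (3 * m))) := by
    rw [show 3 * m + 3 = (3 * m + 2) + 1 by ring, Nat.factorial_succ,
      show 3 * m + 2 = (3 * m + 1) + 1 by ring, Nat.factorial_succ, Nat.factorial_succ]
  have hf2 : Nat.factorial (2 * m + 2)
      = (2 * m + 2) * ((2 * m + 1) * Nat.factorial (2 * m)) := by
    rw [show 2 * m + 2 = (2 * m + 1) + 1 by ring, Nat.factorial_succ, Nat.factorial_succ]
  have hf1 : Nat.factorial (m + 1) = (m + 1) * Nat.factorial m := Nat.factorial_succ m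
  have key : c1 * ((2 * m + 2) * (2 * m + 1) * (m + 1))
      = (3 * m + 3) * (3 * m + 2) * (3 * m + 1) * c0 := by
    have hpos : 0 < Nat.factorial (2 * m) * Nat.factorial m := by positivity
    apply Nat.eq_of_mul_eq_mul_right hpos
    calc c1 * ((2 * m + 2) * (2 * m + 1) * (m + 1)) * (Nat.factorial (2 * m) * Nat.factorial m)
        = c1 * Nat.factorial (2 * m + 2) * Nat.factorial (m + 1) := by
          rw [hf2, hf1]; ring
      _ = Nat.factorial (3 * m + 3) := h1
      _ = (3 * m + 3) * (3 * m + 2) * (3 * m + 1)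
            * (c0 * Nat.factorial (2 * m) * Nat.factorial m) := by
          rw [hf3, h0]; ring
      _ = (3 * m + 3) * (3 * m + 2) * (3 * m + 1) * c0
            * (Nat.factorial (2 * m) * Nat.factorial m) := by ring
  have hineq : 6 * ((2 * m + 2) * (2 * m + 1) * (m + 1))
      ≤ (3 * m + 3) * (3 * m + 2) * (3 * m + 1) := by
    nlinarith [mul_le_mul_of_nonneg_left hm (by positivity : (0:ℕ) ≤ m * m),
      mul_le_mul_of_nonneg_left hm (by positivity : (0:ℕ) ≤ m)]
  have hposf : 0 < (2 * m + 2) * (2 * m + 1) * (m + 1) := by positivity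
  have : 6 * c0 * ((2 * m + 2) * (2 * m + 1) * (m + 1))
      ≤ c1 * ((2 * m + 2) * (2 * m + 1) * (m + 1)) := by
    rw [key]
    calc 6 * c0 * ((2 * m + 2) * (2 * m + 1) * (m + 1))
        = (6 * ((2 * m + 2) * (2 * m + 1) * (m + 1))) * c0 := by ring
      _ ≤ ((3 * m + 3) * (3 * m + 2) * (3 * m + 1)) * c0 :=
          Nat.mul_le_mul_right _ hineq
  exact Nat.le_of_mul_le_mul_right this hposf

lemma main_nat_ineq : ∀ m : ℕ, 12 ≤ m →
    512 ^ m < (Nat.choose (3 * m) (2 * m)) ^ 2 * 16 ^ m := by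
  intro m hm
  induction m, hm using Nat.le_induction with
  | base =>
    rw [show 3 * 12 = 36 by norm_num, show 2 * 12 = 24 by norm_num, choose_36_24]
    norm_num
  | succ m hm ih =>
    have hstep := choose_step (show 4 ≤ m by omega)
    have hc1 : (6 * Nat.choose (3 * m) (2 * m)) ^ 2 ≤ (Nat.choose (3 * (m + 1)) (2 * (m + 1))) ^ 2 :=
      Nat.pow_le_pow_left hstep 2
    calc 512 ^ (m + 1) = 512 * 512 ^ m := by ring
      _ < 512 * ((Nat.choose (3 * m) (2 * m)) ^ 2 * 16 ^ m) := by
          exact mul_lt_mul_of_pos_left ih (by norm_num)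
      _ ≤ (6 * Nat.choose (3 * m) (2 * m)) ^ 2 * 16 ^ (m + 1) := by
          calc 512 * ((Nat.choose (3 * m) (2 * m)) ^ 2 * 16 ^ m)
              ≤ 576 * ((Nat.choose (3 * m) (2 * m)) ^ 2 * 16 ^ m) := by
                apply Nat.mul_le_mul_right
                norm_num
            _ = (6 * Nat.choose (3 * m) (2 * m)) ^ 2 * 16 ^ (m + 1) := by ring
      _ ≤ (Nat.choose (3 * (m + 1)) (2 * (m + 1))) ^ 2 * 16 ^ (m + 1) :=
          Nat.mul_le_mul_right _ hc1
/-- For all sufficiently large `m`, the 2-thickening of the uniform matroid `U_{3m,2m}`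
violates the multiplicative Merino--Welsh inequality. -/
theorem thickened_uniform_counterexamples :
    ∃ N : ℕ, ∀ m : ℕ, N ≤ m →
      tutte (thicken (unif (3 * m) (2 * m)) 2) (Set.toFinite _) 2 0 *
        tutte (thicken (unif (3 * m) (2 * m)) 2) (Set.toFinite _) 0 2 <
      tutte (thicken (unif (3 * m) (2 * m)) 2) (Set.toFinite _) 1 1 ^ 2 := by
  refine ⟨12, fun m hm => ?_⟩
  have hrn : 2 * m ≤ 3 * m := by omega
  set M := thicken (unif (3 * m) (2 * m)) 2 with hM
  have hE : M.E.Finite := Set.toFinite _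
  have h11 : tutte M (Set.toFinite _) 1 1
      = ((Nat.choose (3 * m) (2 * m)) * 2 ^ (2 * m) : ℝ) := tutte_11 hrn _
  have h20 : |tutte M (Set.toFinite _) 2 0| ≤ 2 ^ (3 * m) := abs_tutte_20_le hrn _
  have h02 : |tutte M (Set.toFinite _) 0 2| ≤ 2 ^ (3 * m * 2) := abs_tutte_02_le _
  have habs : tutte M (Set.toFinite _) 2 0 * tutte M (Set.toFinite _) 0 2
      ≤ (2:ℝ) ^ (3 * m) * 2 ^ (3 * m * 2) := by
    calc tutte M (Set.toFinite _) 2 0 * tutte M (Set.toFinite _) 0 2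
        ≤ |tutte M (Set.toFinite _) 2 0 * tutte M (Set.toFinite _) 0 2| := le_abs_self _
      _ = |tutte M (Set.toFinite _) 2 0| * |tutte M (Set.toFinite _) 0 2| := abs_mul _ _
      _ ≤ (2:ℝ) ^ (3 * m) * 2 ^ (3 * m * 2) := by
          apply mul_le_mul h20 h02 (abs_nonneg _) (by positivity)
  have hpow : (2:ℝ) ^ (3 * m) * 2 ^ (3 * m * 2) = 512 ^ m := by
    rw [← pow_add, show 3 * m + 3 * m * 2 = 9 * m by ring, pow_mul]
    norm_num
  have hsq : tutte M (Set.toFinite _) 1 1 ^ 2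
      = ((Nat.choose (3 * m) (2 * m) : ℝ)) ^ 2 * 16 ^ m := by
    rw [h11, mul_pow, ← pow_mul, show 2 * m * 2 = 4 * m by ring, pow_mul]
    norm_num
  have hnat : (512:ℝ) ^ m < ((Nat.choose (3 * m) (2 * m) : ℝ)) ^ 2 * 16 ^ m := by
    exact_mod_cast main_nat_ineq m hm
  calc tutte M (Set.toFinite _) 2 0 * tutte M (Set.toFinite _) 0 2
      ≤ (2:ℝ) ^ (3 * m) * 2 ^ (3 * m * 2) := habs
    _ = 512 ^ m := hpow
    _ < ((Nat.choose (3 * m) (2 * m) : ℝ)) ^ 2 * 16 ^ m := hnat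
    _ = tutte M (Set.toFinite _) 1 1 ^ 2 := hsq.symm
end

section
/- For every matroid M with finite ground set and every real x, the 2-thickening M^{(2)} satisfies T_{M^{(2)}}(x,0) = T_M(x,0). -/
open Set

section Aux

variable {α β : Type*}

lemma zero_mem_rkSet (M : Matroid α) (S : Set α) :
    0 ∈ {n : ℕ | ∃ I, M.Indep I ∧ I ⊆ S ∧ I.ncard = n} :=
  ⟨∅, M.empty_indep, empty_subset _, Set.ncard_empty α⟩

lemma matroidRk_le_ncard (M : Matroid α) {S : Set α} (hS : S.Finite) :
    matroidRk M S ≤ S.ncard := by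
  refine csSup_le ⟨0, zero_mem_rkSet M S⟩ ?_
  rintro n ⟨I, _, hIS, rfl⟩
  exact Set.ncard_le_ncard hIS hS

lemma matroidRk_comap (M : Matroid β) (f : α → β) (S : Set α) :
    matroidRk (M.comap f) S = matroidRk M (f '' S) := by
  unfold matroidRk
  congr 1
  ext n
  constructor
  · rintro ⟨I, hI, hIS, rfl⟩
    rw [Matroid.comap_indep_iff] at hI
    exact ⟨f '' I, hI.1, image_mono hIS, (Set.ncard_image_of_injOn hI.2).symm ▸ rfl⟩
  · rintro ⟨J, hJ, hJS, rfl⟩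
    obtain ⟨I, hIsub, hbij⟩ := Set.exists_subset_bijOn (S ∩ f ⁻¹' J) f
    have himg : f '' I = J := by
      rw [hbij.image_eq, Set.image_inter_preimage]
      exact inter_eq_self_of_subset_right hJS
    refine ⟨I, ?_, hIsub.trans inter_subset_left, ?_⟩
    · rw [Matroid.comap_indep_iff, himg]
      exact ⟨hJ, hbij.injOn⟩
    · rw [← himg, Set.ncard_image_of_injOn hbij.injOn]

lemma neg_one_pow_sub_real {n k : ℕ} (h : k ≤ n) :
    (-1 : ℝ) ^ (n - k) = (-1) ^ n * (-1) ^ k := by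
  have h2 : ((-1 : ℝ)) ^ k * (-1) ^ k = 1 := by
    rw [← pow_add]; exact Even.neg_one_pow ⟨k, rfl⟩
  calc (-1 : ℝ) ^ (n - k) = (-1) ^ (n - k) * ((-1) ^ k * (-1) ^ k) := by rw [h2, mul_one]
    _ = ((-1) ^ (n - k) * (-1) ^ k) * (-1) ^ k := by ring
    _ = (-1) ^ (n - k + k) * (-1) ^ k := by rw [pow_add]
    _ = (-1) ^ n * (-1) ^ k := by rw [Nat.sub_add_cancel h]

lemma pa_sum [DecidableEq α] (a : α) :
    ∑ T ∈ (({a} : Finset α) ×ˢ (Finset.univ : Finset (Fin 2))).powerset.filter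
      (fun T => T ≠ ∅), (-1 : ℝ) ^ T.card = -1 := by
  have h0 : (∑ T ∈ (({a} : Finset α) ×ˢ (Finset.univ : Finset (Fin 2))).powerset,
      (-1 : ℝ) ^ T.card) = 0 := by
    have h := Finset.sum_powerset_neg_one_pow_card_of_nonempty (α := α × Fin 2)
      (x := ({a} : Finset α) ×ˢ Finset.univ) ⟨(a, 0), by simp⟩
    have := congrArg (fun z : ℤ => (z : ℝ)) h
    push_cast at this
    exact this
  have hsplit := Finset.sum_filter_add_sum_filter_not
    ((({a} : Finset α) ×ˢ (Finset.univ : Finset (Fin 2))).powerset)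
    (fun T => T = ∅) (fun T => (-1 : ℝ) ^ T.card)
  have h1 : (({a} : Finset α) ×ˢ (Finset.univ : Finset (Fin 2))).powerset.filter
      (fun T => T = ∅) = {∅} := by
    ext T
    simp only [Finset.mem_filter, Finset.mem_powerset, Finset.mem_singleton]
    exact ⟨fun h => h.2, fun h => ⟨h ▸ Finset.empty_subset _, h⟩⟩
  rw [h1] at hsplit
  simp only [Finset.sum_singleton, Finset.card_empty, pow_zero] at hsplit
  have : ∑ T ∈ (({a} : Finset α) ×ˢ (Finset.univ : Finset (Fin 2))).powerset.filter
      (fun T => ¬ T = ∅), (-1 : ℝ) ^ T.card = -1 := by linarith [hsplit.trans h0]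
  simpa using this

lemma claimC [DecidableEq α] (A : Finset α) :
    ∑ S ∈ (A ×ˢ (Finset.univ : Finset (Fin 2))).powerset.filter
      (fun S => S.image Prod.fst = A), (-1 : ℝ) ^ S.card = (-1) ^ A.card := by
  induction A using Finset.induction_on with
  | empty => simp [Finset.filter_singleton]
  | @insert a s ha ih =>
    have key : ∑ S ∈ ((insert a s) ×ˢ (Finset.univ : Finset (Fin 2))).powerset.filter
        (fun S => S.image Prod.fst = insert a s), (-1 : ℝ) ^ S.card
        = ∑ p ∈ ((s ×ˢ (Finset.univ : Finset (Fin 2))).powerset.filter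
            (fun S => S.image Prod.fst = s)) ×ˢ
          ((({a} : Finset α) ×ˢ (Finset.univ : Finset (Fin 2))).powerset.filter
            (fun T => T ≠ ∅)),
          (-1 : ℝ) ^ p.1.card * (-1) ^ p.2.card := by
      refine Finset.sum_bij'
        (fun S _ => (S.filter (fun x => x.1 ≠ a), S.filter (fun x => x.1 = a)))
        (fun p _ => p.1 ∪ p.2) ?_ ?_ ?_ ?_ ?_
      · intro S hS
        simp only [Finset.mem_filter, Finset.mem_powerset] at hS
        obtain ⟨hS1, hS2⟩ := hS
        simp only [Finset.mem_product, Finset.mem_filter, Finset.mem_powerset]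
        refine ⟨⟨?_, ?_⟩, ?_, ?_⟩
        · intro x hx
          simp only [Finset.mem_filter] at hx
          have := hS1 hx.1
          simp only [Finset.mem_product, Finset.mem_insert] at this ⊢
          exact ⟨this.1.resolve_left hx.2, this.2⟩
        · ext b
          simp only [Finset.mem_image, Finset.mem_filter]
          constructor
          · rintro ⟨x, ⟨hxS, hxa⟩, rfl⟩
            have := hS1 hxS
            simp only [Finset.mem_product, Finset.mem_insert] at this
            exact this.1.resolve_left hxa
          · intro hb
            have hb' : b ∈ S.image Prod.fst := hS2 ▸ Finset.mem_insert_of_mem hb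
            obtain ⟨x, hxS, rfl⟩ := Finset.mem_image.1 hb'
            exact ⟨x, ⟨hxS, fun h => ha (h ▸ hb)⟩, rfl⟩
        · intro x hx
          simp only [Finset.mem_filter] at hx
          have := hS1 hx.1
          simp only [Finset.mem_product, Finset.mem_singleton, Finset.mem_univ, and_true] at this ⊢
          exact hx.2
        · have : a ∈ S.image Prod.fst := hS2 ▸ Finset.mem_insert_self a s
          obtain ⟨x, hxS, hxa⟩ := Finset.mem_image.1 this
          exact Finset.ne_empty_of_mem (Finset.mem_filter.2 ⟨hxS, hxa⟩)
      · intro p hp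
        simp only [Finset.mem_product, Finset.mem_filter, Finset.mem_powerset] at hp
        obtain ⟨⟨hp1, hp1i⟩, hp2, hp2n⟩ := hp
        simp only [Finset.mem_filter, Finset.mem_powerset]
        have himg2 : p.2.image Prod.fst = {a} := by
          apply Finset.Subset.antisymm
          · intro b hb
            obtain ⟨x, hx, rfl⟩ := Finset.mem_image.1 hb
            have := hp2 hx
            simp only [Finset.mem_product, Finset.mem_singleton] at this
            simp [this.1]
          · intro b hb
            simp only [Finset.mem_singleton] at hb
            obtain ⟨x, hx⟩ := Finset.nonempty_iff_ne_empty.2 hp2n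
            have := hp2 hx
            simp only [Finset.mem_product, Finset.mem_singleton] at this
            exact Finset.mem_image.2 ⟨x, hx, by rw [this.1, hb]⟩
        constructor
        · refine Finset.union_subset (hp1.trans ?_) (hp2.trans ?_)
          · exact Finset.product_subset_product_left (Finset.subset_insert a s)
          · exact Finset.product_subset_product_left (by simp)
        · rw [Finset.image_union, hp1i, himg2, Finset.union_comm, ← Finset.insert_eq]
      · intro S hS
        ext x
        simp only [Finset.mem_union, Finset.mem_filter]
        by_cases hxa : x.1 = a <;> simp [hxa] <;> tauto
      · intro p hp
        simp only [Finset.mem_product, Finset.mem_filter, Finset.mem_powerset] at hp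
        obtain ⟨⟨hp1, hp1i⟩, hp2, _⟩ := hp
        have h1a : ∀ x ∈ p.1, x.1 ≠ a := by
          intro x hx
          have := hp1 hx
          simp only [Finset.mem_product] at this
          exact fun h => ha (h ▸ this.1)
        have h2a : ∀ x ∈ p.2, x.1 = a := by
          intro x hx
          have := hp2 hx
          simp only [Finset.mem_product, Finset.mem_singleton] at this
          exact this.1
        have e1 : (p.1 ∪ p.2).filter (fun x => x.1 ≠ a) = p.1 := by
          ext x
          simp only [Finset.mem_filter, Finset.mem_union]
          constructor
          · rintro ⟨h | h, hxa⟩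
            · exact h
            · exact absurd (h2a x h) hxa
          · intro h
            exact ⟨Or.inl h, h1a x h⟩
        have e2 : (p.1 ∪ p.2).filter (fun x => x.1 = a) = p.2 := by
          ext x
          simp only [Finset.mem_filter, Finset.mem_union]
          constructor
          · rintro ⟨h | h, hxa⟩
            · exact absurd hxa (h1a x h)
            · exact h
          · intro h
            exact ⟨Or.inr h, h2a x h⟩
        exact Prod.ext e1 e2
      · intro S hS
        have hc : (S.filter (fun x => x.1 ≠ a)).card + (S.filter (fun x => x.1 = a)).card
            = S.card := by
          rw [add_comm]
          simpa using Finset.card_filter_add_card_filter_not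
            (p := fun x : α × Fin 2 => x.1 = a) (s := S)
        dsimp only
        rw [← pow_add, hc]
    rw [key, Finset.sum_product]
    simp_rw [← Finset.sum_mul_sum]
    rw [ih, pa_sum, Finset.card_insert_of_notMem ha, pow_succ]

end Aux

/-- For the 2-thickening, `T_{M^{(2)}}(x,0) = T_M(x,0)`. -/
theorem tutte_thicken_two_x_zero {α : Type*} (M : Matroid α) (hE : M.E.Finite) (x : ℝ) :
    tutte (thicken M 2) (thicken_ground_finite hE 2) x 0 = tutte M hE x 0 := by
  classical
  simp only [tutte]
  have hgE2 : (thicken_ground_finite hE 2).toFinset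
      = hE.toFinset ×ˢ (Finset.univ : Finset (Fin 2)) := by
    ext ⟨b, i⟩
    simp [thicken, Matroid.comap_ground_eq]
  have hR : matroidRk (thicken M 2) (thicken M 2).E = matroidRk M M.E := by
    show matroidRk (M.comap Prod.fst) (M.comap Prod.fst).E = _
    rw [Matroid.comap_ground_eq, matroidRk_comap,
      Set.image_preimage_eq M.E Prod.fst_surjective]
  rw [hgE2, hR]
  rw [← Finset.sum_fiberwise_of_maps_to
    (g := fun S : Finset (α × Fin 2) => S.image Prod.fst) (t := hE.toFinset.powerset)
    (fun S hS => by
      rw [Finset.mem_powerset] at hS ⊢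
      intro b hb
      obtain ⟨y, hy, rfl⟩ := Finset.mem_image.1 hb
      exact (Finset.mem_product.1 (hS hy)).1)]
  refine Finset.sum_congr rfl fun A hA => ?_
  rw [Finset.mem_powerset] at hA
  have hfil : (hE.toFinset ×ˢ (Finset.univ : Finset (Fin 2))).powerset.filter
      (fun S => S.image Prod.fst = A)
      = (A ×ˢ (Finset.univ : Finset (Fin 2))).powerset.filter
      (fun S => S.image Prod.fst = A) := by
    ext S
    simp only [Finset.mem_filter, Finset.mem_powerset]
    constructor
    · rintro ⟨h1, h2⟩
      refine ⟨fun y hy => Finset.mem_product.2 ⟨?_, Finset.mem_univ _⟩, h2⟩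
      exact h2 ▸ Finset.mem_image_of_mem _ hy
    · rintro ⟨h1, h2⟩
      exact ⟨h1.trans (Finset.product_subset_product_left hA), h2⟩
  rw [hfil]
  set rkA := matroidRk M (A : Set α) with hrkA
  have hrkAcard : rkA ≤ A.card := by
    simpa [Set.ncard_coe_finset] using matroidRk_le_ncard M A.finite_toSet
  calc
    ∑ S ∈ (A ×ˢ (Finset.univ : Finset (Fin 2))).powerset.filter
        (fun S => S.image Prod.fst = A),
        (x - 1) ^ (matroidRk M M.E - matroidRk (thicken M 2) (S : Set (α × Fin 2)))
          * ((0:ℝ) - 1) ^ (S.card - matroidRk (thicken M 2) (S : Set (α × Fin 2)))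
      = ∑ S ∈ (A ×ˢ (Finset.univ : Finset (Fin 2))).powerset.filter
          (fun S => S.image Prod.fst = A),
          ((x - 1) ^ (matroidRk M M.E - rkA) * (-1) ^ rkA) * (-1 : ℝ) ^ S.card := by
        refine Finset.sum_congr rfl fun S hS => ?_
        obtain ⟨-, himg⟩ := Finset.mem_filter.1 hS
        have hrS : matroidRk (thicken M 2) (S : Set (α × Fin 2)) = rkA := by
          rw [thicken, matroidRk_comap, ← Finset.coe_image, himg, hrkA]
        have hle : rkA ≤ S.card :=
          hrkAcard.trans (himg ▸ Finset.card_image_le)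
        rw [hrS, show ((0:ℝ) - 1) = -1 by norm_num, neg_one_pow_sub_real hle]
        ring
    _ = ((x - 1) ^ (matroidRk M M.E - rkA) * (-1) ^ rkA) * (-1 : ℝ) ^ A.card := by
        rw [← Finset.mul_sum, claimC A]
    _ = (x - 1) ^ (matroidRk M M.E - rkA) * ((0:ℝ) - 1) ^ (A.card - rkA) := by
        rw [show ((0:ℝ) - 1) = -1 by norm_num, neg_one_pow_sub_real hrkAcard]
        ring
end
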